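/- In the probabilistic lambda calculus λ¢ (simply typed lambda calculus with booleans 0 and 1, if-then-else, and a coin constant reducing to 0 or 1 each with probability 1/2, with unrestricted contextual reduction), the reduction relation on probability distributions of terms is not confluent: there exists a term from which two reduction sequences reach two distinct normal distributions. -/

import Mathlib

/-- Terms of λ¢ (de Bruijn): variables, abstraction, application,
    booleans `one`/`zero`, if-then-else, and a coin. -/
inductive Tm : Type
  | var : Nat → Tm
  | lam : Tm → Tm
  | app : Tm → Tm → Tm
  | one : Tm
  | zero : Tm
  | ite : Tm → Tm → Tm → Tm
  | coin : Tm
  deriving DecidableEq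

/-- Lifting of de Bruijn indices (indices ≥ d are incremented). -/
def lift (d : Nat) : Tm → Tm
  | .var n => if n < d then .var n else .var (n+1)
  | .lam t => .lam (lift (d+1) t)
  | .app t u => .app (lift d t) (lift d u)
  | .one => .one
  | .zero => .zero
  | .ite c a b => .ite (lift d c) (lift d a) (lift d b)
  | .coin => .coin

/-- Capture-avoiding substitution `t[s/k]` (de Bruijn). -/
def subst : Tm → Nat → Tm → Tm
  | .var n, k, s => if n = k then s else if k < n then .var (n-1) else .var n
  | .lam t, k, s => .lam (subst t (k+1) (lift 0 s))
  | .app t u, k, s => .app (subst t k s) (subst u k s)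
  | .one, _, _ => .one
  | .zero, _, _ => .zero
  | .ite c a b, k, s => .ite (subst c k s) (subst a k s) (subst b k s)
  | .coin, _, _ => .coin

/-- One-step probabilistic reduction `t →_p r` of λ¢:
    β, if-rules (probability 1), coin toss (probability 1/2 each),
    closed under all contexts. -/
inductive Step : Tm → ℚ → Tm → Prop
  | beta (t r) : Step (.app (.lam t) r) 1 (subst t 0 r)
  | iteOne (a b) : Step (.ite .one a b) 1 a
  | iteZero (a b) : Step (.ite .zero a b) 1 b
  | coinOne : Step .coin (1/2) .one
  | coinZero : Step .coin (1/2) .zero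
  | lam {t p t'} : Step t p t' → Step (.lam t) p (.lam t')
  | appL {t p t'} (u) : Step t p t' → Step (.app t u) p (.app t' u)
  | appR {u p u'} (t) : Step u p u' → Step (.app t u) p (.app t u')
  | iteC {c p c'} (a b) : Step c p c' → Step (.ite c a b) p (.ite c' a b)
  | iteA {a p a'} (c b) : Step a p a' → Step (.ite c a b) p (.ite c a' b)
  | iteB {b p b'} (c a) : Step b p b' → Step (.ite c a b) p (.ite c a b')

/-- A term is normal if no probabilistic step applies. -/
def NormalTm (t : Tm) : Prop := ¬ ∃ p r, Step t p r

/-- (Sub)probability distributions over terms, as finitely supported maps. -/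
abbrev PDist := Tm →₀ ℚ

/-- Contraction of one redex occurrence of a term, producing the
    distribution of its results: deterministic rules give a Dirac
    distribution, a coin redex splits 1/2–1/2; closed under contexts. -/
inductive TStep : Tm → PDist → Prop
  | beta (t r) : TStep (.app (.lam t) r) (Finsupp.single (subst t 0 r) 1)
  | iteOne (a b) : TStep (.ite .one a b) (Finsupp.single a 1)
  | iteZero (a b) : TStep (.ite .zero a b) (Finsupp.single b 1)
  | coin : TStep .coin (Finsupp.single Tm.one (1/2) + Finsupp.single Tm.zero (1/2))
  | lam {t D} : TStep t D → TStep (.lam t) (D.mapDomain .lam)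
  | appL {t D} (u) : TStep t D → TStep (.app t u) (D.mapDomain (fun s => .app s u))
  | appR {u D} (t) : TStep u D → TStep (.app t u) (D.mapDomain (fun s => .app t s))
  | iteC {c D} (a b) : TStep c D → TStep (.ite c a b) (D.mapDomain (fun s => .ite s a b))
  | iteA {a D} (c b) : TStep a D → TStep (.ite c a b) (D.mapDomain (fun s => .ite c s b))
  | iteB {b D} (c a) : TStep b D → TStep (.ite c a b) (D.mapDomain (fun s => .ite c a s))

/-- One distribution-reduction step: pick a term `t` in the support,
    contract one redex occurrence of `t` and redistribute its probability
    mass accordingly (equal results are merged by the `Finsupp` addition). -/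
def DStep (D D' : PDist) : Prop :=
  ∃ t E, D t ≠ 0 ∧ TStep t E ∧ D' = D.erase t + D t • E

/-- Multistep distribution reduction. -/
def DSteps : PDist → PDist → Prop := Relation.ReflTransGen DStep

/-- A distribution is normal when every term in its support is normal. -/
def NormalDist (D : PDist) : Prop := ∀ t ∈ D.support, NormalTm t

/-!
Take `(λx. λy. y x x) coin`. Tossing the coin before the β-step duplicates its outcome, giving
`λy. y 1 1` and `λy. y 0 0` with probability `1/2` each. Performing the β-step first duplicates
the coin itself; the two copies are then tossed independently, giving each `λy. y a b` with
`a, b ∈ {0, 1}` probability `1/4`. Both distributions are normal and they differ at `λy. y 1 0`.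
-/

namespace Tm

/-- `λy. y a b`; `a` and `b` are not lifted under the binder, so they should be closed
(or `var 1`, which then names the enclosing binder). -/
def pair (a b : Tm) : Tm := .lam (.app (.app (.var 0) a) b)

/-- `λx. λy. y x x` -/
def diag : Tm := .lam (pair (.var 1) (.var 1))

def isNormal : Tm → Bool
  | .var _ | .one | .zero => true
  | .lam t => t.isNormal
  | .app (.lam _) _ => false
  | .app t u => t.isNormal && u.isNormal
  | .ite .one _ _ | .ite .zero _ _ => false
  | .ite c a b => c.isNormal && a.isNormal && b.isNormal
  | .coin => false

theorem isNormal_eq_false_of_step {t r : Tm} {p : ℚ} (h : Step t p r) : t.isNormal = false := by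
  induction h with
  | @appL t _ _ _ _ ih => cases t <;> simp_all [isNormal]
  | appR t _ ih => cases t <;> simp_all [isNormal]
  | @iteC c _ _ _ _ _ ih => cases c <;> simp_all [isNormal]
  | iteA c _ _ ih => cases c <;> simp_all [isNormal]
  | iteB c _ _ ih => cases c <;> simp_all [isNormal]
  | _ => simp_all [isNormal]

theorem normalTm_of_isNormal {t : Tm} (h : t.isNormal) : NormalTm t := fun ⟨_, _, hs⟩ => by
  simp [isNormal_eq_false_of_step hs] at h

end Tm

open Tm

theorem NormalDist.single {t : Tm} (p : ℚ) (h : NormalTm t) : NormalDist (Finsupp.single t p) :=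
  fun _ hs => Finset.mem_singleton.1 (Finsupp.support_single_subset hs) ▸ h

theorem NormalDist.add {D D' : PDist} (hD : NormalDist D) (hD' : NormalDist D') :
    NormalDist (D + D') :=
  fun _ hs => (Finset.mem_union.1 (Finsupp.support_add hs)).elim (hD _) (hD' _)

theorem DStep.add_single {D : PDist} {t : Tm} {p : ℚ} {E D' : PDist} (hD : D t = 0) (hp : p ≠ 0)
    (h : TStep t E) (hD' : D' = D + p • E) : DStep (D + Finsupp.single t p) D' := by
  refine ⟨t, E, by simpa [hD] using hp, h, ?_⟩
  rw [hD', Finsupp.erase_add, Finsupp.erase_single, Finsupp.erase_of_notMem_support (by simpa)]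
  simp [hD]

theorem DStep.single_add {D : PDist} {t : Tm} {p : ℚ} {E D' : PDist} (hD : D t = 0) (hp : p ≠ 0)
    (h : TStep t E) (hD' : D' = D + p • E) : DStep (Finsupp.single t p + D) D' :=
  add_comm D _ ▸ add_single hD hp h hD'

theorem DStep.single {t : Tm} {p : ℚ} {E D' : PDist} (hp : p ≠ 0) (h : TStep t E)
    (hD' : D' = p • E) : DStep (Finsupp.single t p) D' := by
  simpa using DStep.add_single (D := 0) rfl hp h (by simpa using hD')

theorem TStep.app_coin (t : Tm) :
    TStep (.app t .coin)
      (Finsupp.single (.app t .one) (1/2) + Finsupp.single (.app t .zero) (1/2)) := by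
  simpa [Finsupp.mapDomain_add] using TStep.appR t TStep.coin

theorem TStep.pair_coin_left (b : Tm) :
    TStep (pair .coin b)
      (Finsupp.single (pair .one b) (1/2) + Finsupp.single (pair .zero b) (1/2)) := by
  simpa [Finsupp.mapDomain_add, pair] using
    TStep.lam (TStep.appL b (TStep.appR (.var 0) TStep.coin))

theorem TStep.pair_coin_right (a : Tm) :
    TStep (pair a .coin)
      (Finsupp.single (pair a .one) (1/2) + Finsupp.single (pair a .zero) (1/2)) := by
  simpa [Finsupp.mapDomain_add, pair] using TStep.lam (TStep.appR (.app (.var 0) a) TStep.coin)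

theorem TStep.diag_app {b : Tm} (hb : lift 0 b = b) :
    TStep (.app diag b) (Finsupp.single (pair b b) 1) := by
  simpa [diag, pair, subst, hb] using TStep.beta (pair (.var 1) (.var 1)) b

noncomputable def cbvResult : PDist :=
  Finsupp.single (pair .one .one) (1/2) + Finsupp.single (pair .zero .zero) (1/2)

noncomputable def cbnResult : PDist :=
  Finsupp.single (pair .one .one) (1/4) + Finsupp.single (pair .one .zero) (1/4) +
    Finsupp.single (pair .zero .one) (1/4) + Finsupp.single (pair .zero .zero) (1/4)

theorem dsteps_diag_coin_cbvResult : DSteps (Finsupp.single (.app diag .coin) 1) cbvResult := by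
  have tossCoin : DStep (Finsupp.single (.app diag .coin) 1)
      (Finsupp.single (.app diag .one) (1/2) + Finsupp.single (.app diag .zero) (1/2)) :=
    DStep.single one_ne_zero (TStep.app_coin diag) (one_smul _ _).symm
  have betaZero : DStep
      (Finsupp.single (.app diag .one) (1/2) + Finsupp.single (.app diag .zero) (1/2))
      (Finsupp.single (.app diag .one) (1/2) + Finsupp.single (pair .zero .zero) (1/2)) :=
    DStep.add_single (by simp) (by norm_num) (TStep.diag_app rfl) (by simp [Finsupp.smul_single])
  have betaOne : DStep
      (Finsupp.single (.app diag .one) (1/2) + Finsupp.single (pair .zero .zero) (1/2))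
      cbvResult :=
    DStep.single_add (by simp [pair]) (by norm_num) (TStep.diag_app rfl)
      (by simp [Finsupp.smul_single, cbvResult, add_comm])
  exact .head tossCoin (.head betaZero (.head betaOne .refl))

theorem dsteps_diag_coin_cbnResult : DSteps (Finsupp.single (.app diag .coin) 1) cbnResult := by
  have beta : DStep (Finsupp.single (.app diag .coin) 1) (Finsupp.single (pair .coin .coin) 1) :=
    DStep.single one_ne_zero (TStep.diag_app rfl) (by simp)
  have tossFirst : DStep (Finsupp.single (pair .coin .coin) 1)
      (Finsupp.single (pair .one .coin) (1/2) + Finsupp.single (pair .zero .coin) (1/2)) :=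
    DStep.single one_ne_zero (TStep.pair_coin_left .coin) (one_smul _ _).symm
  have tossSecondZero : DStep
      (Finsupp.single (pair .one .coin) (1/2) + Finsupp.single (pair .zero .coin) (1/2))
      (Finsupp.single (pair .one .coin) (1/2) +
        (Finsupp.single (pair .zero .one) (1/4) + Finsupp.single (pair .zero .zero) (1/4))) :=
    DStep.add_single (by simp [pair]) (by norm_num) (TStep.pair_coin_right .zero)
      (by simp only [smul_add, Finsupp.smul_single, smul_eq_mul]; norm_num)
  have tossSecondOne : DStep
      (Finsupp.single (pair .one .coin) (1/2) +
        (Finsupp.single (pair .zero .one) (1/4) + Finsupp.single (pair .zero .zero) (1/4)))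
      cbnResult :=
    DStep.single_add (by simp [pair]) (by norm_num) (TStep.pair_coin_right .one)
      (by simp only [smul_add, Finsupp.smul_single, smul_eq_mul, cbnResult]; norm_num; abel)
  exact .head beta (.head tossFirst (.head tossSecondZero (.head tossSecondOne .refl)))

theorem normalDist_cbvResult : NormalDist cbvResult :=
  .add (.single _ (normalTm_of_isNormal rfl)) (.single _ (normalTm_of_isNormal rfl))

theorem normalDist_cbnResult : NormalDist cbnResult :=
  .add (.add (.add (.single _ (normalTm_of_isNormal rfl)) (.single _ (normalTm_of_isNormal rfl)))
    (.single _ (normalTm_of_isNormal rfl))) (.single _ (normalTm_of_isNormal rfl))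

theorem cbvResult_ne_cbnResult : cbvResult ≠ cbnResult := fun h => by
  simpa [cbvResult, cbnResult, pair] using DFunLike.congr_fun h (pair .one .zero)

theorem lambda_coin_not_confluent :
    ∃ (t : Tm) (E₁ E₂ : PDist),
      DSteps (Finsupp.single t 1) E₁ ∧ DSteps (Finsupp.single t 1) E₂ ∧
      NormalDist E₁ ∧ NormalDist E₂ ∧ E₁ ≠ E₂ :=
  ⟨.app diag .coin, cbvResult, cbnResult, dsteps_diag_coin_cbvResult, dsteps_diag_coin_cbnResult,
    normalDist_cbvResult, normalDist_cbnResult, cbvResult_ne_cbnResult⟩
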